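/- arXiv:1102.1191 — 3 statements merged into one kernel-verified Lean document; each statement's English description precedes it below -/
import Mathlib

section
/- Let F and F* be distribution functions on ℝ of probability measures with equal (finite) second moments and equal first moments, and define G(s) = ∫_{-∞}^s F(t) dt and G*(s) = ∫_{-∞}^s F*(t) dt. If G(s) ≥ G*(s) for all s ∈ ℝ, then G = G* and hence F = F*. -/
/-!
Write `G(s) = ∫_{t ≤ s} F(t) dt = E (s - X)⁺`. Then `E (X - s)⁺ = G(s) - s + E X`, and by Tonelli
`∫_{s ≤ 0} E (s - X)⁺ ds + ∫_{s > 0} E (X - s)⁺ ds = E X² / 2`. With equal means this makes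
`G - G*` a nonnegative continuous function whose integral over `ℝ` is `(E X² - E X*²) / 2 = 0`,
so `G = G*`. Since `F` is right-continuous it is the right derivative of `G`, whence `F = F*`.
-/

open MeasureTheory Set ENNReal ProbabilityTheory

lemma lintegral_Iic_ofReal_sub (a b : ℝ) :
    ∫⁻ s in Iic b, ENNReal.ofReal (s - a) = ENNReal.ofReal (max (b - a) 0 ^ 2 / 2) := by
  have vanish : ∀ c ≤ a, ∫⁻ s in Iic c, ENNReal.ofReal (s - a) = 0 := fun c hc =>
    setLIntegral_eq_zero measurableSet_Iic fun s hs => ofReal_eq_zero.2 (by linarith [hs.out])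
  rcases le_total a b with hab | hba
  · rw [← Iic_union_Ioc_eq_Iic hab, lintegral_union measurableSet_Ioc (Iic_disjoint_Ioc le_rfl),
      vanish a le_rfl, zero_add, ← ofReal_integral_eq_lintegral_ofReal,
      ← intervalIntegral.integral_of_le hab, max_eq_left (sub_nonneg.2 hab),
      intervalIntegral.integral_sub intervalIntegral.intervalIntegrable_id intervalIntegrable_const,
      integral_id, intervalIntegral.integral_const, smul_eq_mul]
    · congr 1; ring
    · exact (continuous_id.sub continuous_const).integrableOn_Ioc
    · exact (ae_restrict_iff' measurableSet_Ioc).2 (.of_forall fun s hs => sub_nonneg.2 hs.1.le)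
  · simp [vanish b hba, max_eq_right (sub_nonpos.2 hba)]

lemma lintegral_Ioi_ofReal_sub (a b : ℝ) :
    ∫⁻ s in Ioi a, ENNReal.ofReal (b - s) = ENNReal.ofReal (max (b - a) 0 ^ 2 / 2) := by
  have vanish : ∀ c ≥ b, ∫⁻ s in Ioi c, ENNReal.ofReal (b - s) = 0 := fun c hc =>
    setLIntegral_eq_zero measurableSet_Ioi fun s hs => ofReal_eq_zero.2 (by linarith [hs.out])
  rcases le_total a b with hab | hba
  · rw [← Ioc_union_Ioi_eq_Ioi hab, lintegral_union measurableSet_Ioi (Ioc_disjoint_Ioi le_rfl),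
      vanish b le_rfl, add_zero, ← ofReal_integral_eq_lintegral_ofReal,
      ← intervalIntegral.integral_of_le hab, max_eq_left (sub_nonneg.2 hab),
      intervalIntegral.integral_sub intervalIntegrable_const intervalIntegral.intervalIntegrable_id,
      integral_id, intervalIntegral.integral_const, smul_eq_mul]
    · congr 1; ring
    · exact (continuous_const.sub continuous_id).integrableOn_Ioc
    · exact (ae_restrict_iff' measurableSet_Ioc).2 (.of_forall fun s hs => sub_nonneg.2 hs.2)
  · simp [vanish a hba, max_eq_right (sub_nonpos.2 hba)]

lemma lintegral_Iic_measure_Iic (μ : Measure ℝ) [SFinite μ] (s : ℝ) :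
    ∫⁻ t in Iic s, μ (Iic t) = ∫⁻ x, ENNReal.ofReal (s - x) ∂μ := by
  let below : ℝ → ℝ → ℝ≥0∞ := fun t x => (Iic t).indicator 1 x
  have hmeas : Measurable (Function.uncurry below) :=
    measurable_one.indicator (measurableSet_le measurable_snd measurable_fst)
  calc ∫⁻ t in Iic s, μ (Iic t) = ∫⁻ t in Iic s, ∫⁻ x, below t x ∂μ := by
        simp_rw [below, lintegral_indicator_one measurableSet_Iic]
    _ = ∫⁻ x, ∫⁻ t in Iic s, below t x ∂volume ∂μ := lintegral_lintegral_swap hmeas.aemeasurable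
    _ = ∫⁻ x, ENNReal.ofReal (s - x) ∂μ := by
        refine lintegral_congr fun x => ?_
        have : (fun t => below t x) = (Ici x).indicator 1 := by ext t; simp [below, indicator]
        rw [this, lintegral_indicator_one measurableSet_Ici,
          Measure.restrict_apply measurableSet_Ici, Ici_inter_Iic, Real.volume_Icc]

section IntegralIic

variable {E : Type*} [NormedAddCommGroup E] {f : ℝ → E}

lemma intervalIntegrable_of_integrableOn_Iic (hf : ∀ a, IntegrableOn f (Iic a)) (a b : ℝ) :
    IntervalIntegrable f volume a b :=
  ((hf (max a b)).mono_set fun _ hx => hx.2).intervalIntegrable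

variable [NormedSpace ℝ E]

lemma integral_Iic_eq_add_intervalIntegral (hf : ∀ a, IntegrableOn f (Iic a)) (a b : ℝ) :
    ∫ t in Iic b, f t = (∫ t in Iic a, f t) + ∫ t in a..b, f t :=
  sub_eq_iff_eq_add'.1 (intervalIntegral.integral_Iic_sub_Iic (hf a) (hf b))

lemma continuous_integral_Iic [CompleteSpace E] (hf : ∀ a, IntegrableOn f (Iic a)) :
    Continuous fun s => ∫ t in Iic s, f t := by
  rw [funext (integral_Iic_eq_add_intervalIntegral hf 0)]
  exact continuous_const.add
    (intervalIntegral.continuous_primitive (intervalIntegrable_of_integrableOn_Iic hf) 0)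

lemma hasDerivWithinAt_integral_Iic [CompleteSpace E] (hf : ∀ a, IntegrableOn f (Iic a))
    (hfm : StronglyMeasurable f) {b : ℝ} (hb : ContinuousWithinAt f (Ioi b) b) :
    HasDerivWithinAt (fun u => ∫ t in Iic u, f t) (f b) (Ici b) b := by
  rw [funext (integral_Iic_eq_add_intervalIntegral hf 0)]
  exact (intervalIntegral.integral_hasDerivWithinAt_right (s := Ici b) (t := Ioi b)
    (intervalIntegrable_of_integrableOn_Iic hf 0 b) hfm.stronglyMeasurableAtFilter hb).const_add _

end IntegralIic

lemma integrable_of_integrable_sq {μ : Measure ℝ} [IsFiniteMeasure μ]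
    (hμ : Integrable (fun x => x ^ 2) μ) : Integrable (fun x => x) μ :=
  ((memLp_two_iff_integrable_sq aestronglyMeasurable_id).2 hμ).integrable one_le_two

section IntegratedCdf

variable {μ : Measure ℝ} [IsProbabilityMeasure μ]

-- Both sides are the junk value `0` when `μ` has no first moment.
lemma integral_Iic_cdf (s : ℝ) :
    ∫ t in Iic s, cdf μ t = ∫ x, max (s - x) 0 ∂μ := by
  rw [integral_eq_lintegral_of_nonneg_ae (.of_forall (cdf_nonneg μ))
      (cdf μ).mono.measurable.aestronglyMeasurable,
    integral_eq_lintegral_of_nonneg_ae (f := fun x => max (s - x) 0)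
      (.of_forall fun x => le_max_right _ _) (by fun_prop)]
  simp [ofReal_cdf, lintegral_Iic_measure_Iic]

lemma integrableOn_Iic_cdf (hμ : Integrable (fun x => x) μ) (s : ℝ) :
    IntegrableOn (cdf μ) (Iic s) := by
  refine ⟨(cdf μ).mono.measurable.aestronglyMeasurable, ?_⟩
  simp_rw [hasFiniteIntegral_iff_ofReal (.of_forall (cdf_nonneg μ)), ofReal_cdf,
    lintegral_Iic_measure_Iic]
  exact ((integrable_const s).sub hμ).lintegral_lt_top

lemma cdf_eq_of_integral_Iic_cdf_eq {ν : Measure ℝ} [IsProbabilityMeasure ν]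
    (hμ : Integrable (fun x => x) μ) (hν : Integrable (fun x => x) ν)
    (h : ∀ s, ∫ t in Iic s, cdf μ t = ∫ t in Iic s, cdf ν t) : cdf μ = cdf ν := by
  ext s
  have hderiv (ρ : Measure ℝ) [IsProbabilityMeasure ρ] (hρ : Integrable (fun x => x) ρ) :=
    hasDerivWithinAt_integral_Iic (integrableOn_Iic_cdf hρ)
      (cdf ρ).mono.measurable.stronglyMeasurable
      (((cdf ρ).right_continuous s).mono Ioi_subset_Ici_self)
  have hμs := hderiv μ hμ
  simp_rw [h] at hμs
  exact (uniqueDiffWithinAt_Ici s).eq_deriv _ hμs (hderiv ν hν)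

end IntegratedCdf

section RampKernel

noncomputable def rampKernel (s x : ℝ) : ℝ := if s ≤ 0 then max (s - x) 0 else max (x - s) 0

lemma rampKernel_nonneg (s x : ℝ) : 0 ≤ rampKernel s x := by
  unfold rampKernel; split_ifs <;> exact le_max_right _ _

lemma measurable_rampKernel : Measurable (Function.uncurry rampKernel) :=
  Measurable.ite (measurableSet_le measurable_fst measurable_const) (by fun_prop) (by fun_prop)

lemma lintegral_ofReal_rampKernel (x : ℝ) :
    ∫⁻ s, ENNReal.ofReal (rampKernel s x) = ENNReal.ofReal (x ^ 2 / 2) := by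
  have hleft : ∫⁻ s in Iic 0, ENNReal.ofReal (rampKernel s x)
      = ∫⁻ s in Iic 0, ENNReal.ofReal (s - x) :=
    setLIntegral_congr_fun measurableSet_Iic fun s (hs : s ≤ 0) => by simp [rampKernel, hs]
  have hright : ∫⁻ s in Ioi 0, ENNReal.ofReal (rampKernel s x)
      = ∫⁻ s in Ioi 0, ENNReal.ofReal (x - s) :=
    setLIntegral_congr_fun measurableSet_Ioi fun s (hs : 0 < s) => by simp [rampKernel, hs.not_ge]
  rw [← lintegral_add_compl _ (measurableSet_Iic (a := 0)), compl_Iic, hleft, hright,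
    lintegral_Iic_ofReal_sub, lintegral_Ioi_ofReal_sub,
    ← ofReal_add (by positivity) (by positivity)]
  congr 1
  rcases le_total x 0 with hx | hx <;> simp [hx]

variable {μ : Measure ℝ}

lemma integrable_rampKernel [IsFiniteMeasure μ] (hμ : Integrable (fun x => x) μ) (s : ℝ) :
    Integrable (rampKernel s) μ := by
  unfold rampKernel
  split_ifs
  · exact ((integrable_const s).sub hμ).pos_part
  · exact (hμ.sub (integrable_const s)).pos_part

lemma lintegral_integral_rampKernel [IsFiniteMeasure μ] (hμ : Integrable (fun x => x ^ 2) μ) :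
    ∫⁻ s, ENNReal.ofReal (∫ x, rampKernel s x ∂μ) = ENNReal.ofReal ((∫ x, x ^ 2 ∂μ) / 2) := by
  calc ∫⁻ s, ENNReal.ofReal (∫ x, rampKernel s x ∂μ)
      = ∫⁻ s, ∫⁻ x, ENNReal.ofReal (rampKernel s x) ∂μ :=
        lintegral_congr fun s => ofReal_integral_eq_lintegral_ofReal
          (integrable_rampKernel (integrable_of_integrable_sq hμ) s)
          (.of_forall (rampKernel_nonneg s))
    _ = ∫⁻ x, ∫⁻ s, ENNReal.ofReal (rampKernel s x) ∂volume ∂μ :=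
        lintegral_lintegral_swap measurable_rampKernel.ennreal_ofReal.aemeasurable
    _ = ENNReal.ofReal ((∫ x, x ^ 2 ∂μ) / 2) := by
        simp_rw [lintegral_ofReal_rampKernel, ← integral_div]
        exact (ofReal_integral_eq_lintegral_ofReal (hμ.div_const 2)
          (.of_forall fun x => by positivity)).symm

lemma integral_rampKernel [IsProbabilityMeasure μ] (hμ : Integrable (fun x => x) μ) (s : ℝ) :
    ∫ x, rampKernel s x ∂μ = (∫ t in Iic s, cdf μ t) - if s ≤ 0 then 0 else s - ∫ x, x ∂μ := by
  rw [integral_Iic_cdf]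
  unfold rampKernel
  split_ifs
  · simp
  · have hsplit : (fun x => max (s - x) 0) = fun x => max (x - s) 0 + (s - x) := by
      ext x; rcases le_total x s with h | h <;> simp [h]
    rw [hsplit, integral_add (f := fun x => max (x - s) 0) (g := fun x => s - x)
      (hμ.sub (integrable_const s)).pos_part ((integrable_const s).sub hμ),
      integral_sub (f := fun _ => s) (integrable_const s) hμ]
    simp

end RampKernel

theorem integral_Iic_cdf_eq_of_le {μ ν : Measure ℝ} [IsProbabilityMeasure μ]
    [IsProbabilityMeasure ν] (hμ : Integrable (fun x => x ^ 2) μ)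
    (hν : Integrable (fun x => x ^ 2) ν) (hmean : ∫ x, x ∂μ = ∫ x, x ∂ν)
    (hsecond : ∫ x, x ^ 2 ∂μ = ∫ x, x ^ 2 ∂ν)
    (hle : ∀ s, ∫ t in Iic s, cdf ν t ≤ ∫ t in Iic s, cdf μ t) :
    ∀ s, ∫ t in Iic s, cdf μ t = ∫ t in Iic s, cdf ν t := by
  have hμ1 := integrable_of_integrable_sq hμ
  have hν1 := integrable_of_integrable_sq hν
  set K : Measure ℝ → ℝ → ℝ := fun ρ s => ∫ x, rampKernel s x ∂ρ
  have hdiff (s : ℝ) : K μ s - K ν s = (∫ t in Iic s, cdf μ t) - ∫ t in Iic s, cdf ν t := by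
    simp only [K, integral_rampKernel hμ1, integral_rampKernel hν1, hmean]
    ring
  have hKμ : Measurable (K μ) :=
    (measurable_rampKernel.stronglyMeasurable.integral_prod_right').measurable
  have hKae : (fun s => ENNReal.ofReal (K ν s)) =ᵐ[volume] fun s => ENNReal.ofReal (K μ s) :=
    ae_eq_of_ae_le_of_lintegral_le
      (.of_forall fun s => ofReal_le_ofReal (by linarith [hdiff s, hle s]))
      (by rw [lintegral_integral_rampKernel hν]; exact ofReal_ne_top)
      hKμ.ennreal_ofReal.aemeasurable
      (by rw [lintegral_integral_rampKernel hμ, lintegral_integral_rampKernel hν, hsecond])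
  have hae : (fun s => ∫ t in Iic s, cdf μ t) =ᵐ[volume] fun s => ∫ t in Iic s, cdf ν t := by
    filter_upwards [hKae] with s hs
    rw [ofReal_eq_ofReal_iff (integral_nonneg (rampKernel_nonneg s))
      (integral_nonneg (rampKernel_nonneg s))] at hs
    linarith [hdiff s]
  exact congrFun <| (Continuous.ae_eq_iff_eq volume
    (continuous_integral_Iic (integrableOn_Iic_cdf hμ1))
    (continuous_integral_Iic (integrableOn_Iic_cdf hν1))).1 hae

theorem cdf_integral_domination_implies_equal
    (μ μs : Measure ℝ) [IsProbabilityMeasure μ] [IsProbabilityMeasure μs]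
    (h2 : Integrable (fun x => x ^ 2) μ) (h2s : Integrable (fun x => x ^ 2) μs)
    (hmean : ∫ x, x ∂μ = ∫ x, x ∂μs)
    (hsecond : ∫ x, x ^ 2 ∂μ = ∫ x, x ^ 2 ∂μs)
    (F : ℝ → ℝ) (Fs : ℝ → ℝ)
    (hF : ∀ t, F t = (μ (Iic t)).toReal)
    (hFs : ∀ t, Fs t = (μs (Iic t)).toReal)
    (G : ℝ → ℝ) (Gs : ℝ → ℝ)
    (hG : ∀ s, G s = ∫ t in Iic s, F t)
    (hGs : ∀ s, Gs s = ∫ t in Iic s, Fs t)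
    (hdom : ∀ s, Gs s ≤ G s) :
    G = Gs ∧ F = Fs := by
  have hFμ : F = cdf μ := funext fun t => by rw [hF, cdf_eq_real]; rfl
  have hFμs : Fs = cdf μs := funext fun t => by rw [hFs, cdf_eq_real]; rfl
  subst hFμ hFμs
  have hGGs : ∀ s, ∫ t in Iic s, cdf μ t = ∫ t in Iic s, cdf μs t :=
    integral_Iic_cdf_eq_of_le h2 h2s hmean hsecond fun s => by rw [← hG, ← hGs]; exact hdom s
  refine ⟨funext fun s => by rw [hG, hGs, hGGs], ?_⟩
  rw [cdf_eq_of_integral_Iic_cdf_eq (integrable_of_integrable_sq h2)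
    (integrable_of_integrable_sq h2s) hGGs]
end

section
/- Let f̂ be a probability density supported on a set C, written on a piece C_j of a partition as f̂(x) = exp(b^T x - β), with the global bound f̂(x - y) ≤ exp(b^T (x-y) - β) for all y ∈ ℝ^d and x ∈ C_j. Let f̃ = f̂ ∗ N_d(0, A) with A positive semi-definite. Then for x ∈ C_j, (f̃(x) - f̂(x))/f̂(x) ≤ exp(b^T A b / 2) - 1. -/
open MeasureTheory Real Matrix

/-- The density of the `N_d(0, A)` Gaussian distribution. -/
noncomputable def gaussianDensity {d : ℕ} (A : Matrix (Fin d) (Fin d) ℝ)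
    (y : Fin d → ℝ) : ℝ :=
  (2 * π) ^ (-(d : ℝ) / 2) * A.det ^ (-(1 : ℝ) / 2) *
    Real.exp (-(y ⬝ᵥ A⁻¹.mulVec y) / 2)
/-! Since `f̂(x - y) ≤ exp (b ⬝ᵥ (x - y) - β) = f̂(x) exp (-(b ⬝ᵥ y))`, the smoothed value `f̃(x)` is
at most `f̂(x)` times the Gaussian moment generating function `∫ exp (-(b ⬝ᵥ y)) φ_A(y) dy`.
Completing the square gives `exp (-(b ⬝ᵥ y)) φ_A(y) = exp (bᵀAb / 2) φ_A(y + Ab)`, so that integral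
is `exp (bᵀAb / 2)`. The normalisation `∫ φ_A = 1` comes from writing `A = BᵀB` and substituting
`y = Bᵀz`, which turns `φ_A` into a multiple of the standard Gaussian, a product of
one-dimensional Gaussians. -/

namespace Matrix

variable {ι : Type*} [Fintype ι] [DecidableEq ι] {M : Matrix ι ι ℝ}

theorem measurableEmbedding_mulVec (hM : M.det ≠ 0) : MeasurableEmbedding (M *ᵥ ·) :=
  (M.toLinearEquiv' (M.invertibleOfIsUnitDet hM.isUnit)).toContinuousLinearEquiv.toHomeomorph
    |>.measurableEmbedding

theorem map_mulVec_volume (hM : M.det ≠ 0) :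
    Measure.map (M *ᵥ ·) volume = ENNReal.ofReal |M.det⁻¹| • volume :=
  Real.map_matrix_volume_pi_eq_smul_volume_pi hM

theorem integral_eq_abs_det_mul_integral_comp_mulVec (hM : M.det ≠ 0) (f : (ι → ℝ) → ℝ) :
    ∫ y, f y = |M.det| * ∫ z, f (M *ᵥ z) := by
  rw [← (measurableEmbedding_mulVec hM).integral_map, map_mulVec_volume hM,
    integral_smul_measure, ENNReal.toReal_ofReal (abs_nonneg _), smul_eq_mul, ← mul_assoc,
    abs_inv, mul_inv_cancel₀ (abs_ne_zero.mpr hM), one_mul]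

theorem integrable_comp_mulVec_iff (hM : M.det ≠ 0) {f : (ι → ℝ) → ℝ} :
    Integrable (fun z ↦ f (M *ᵥ z)) ↔ Integrable f := by
  rw [← Function.comp_def, ← (measurableEmbedding_mulVec hM).integrable_map_iff,
    map_mulVec_volume hM]
  exact integrable_smul_measure (by simpa using hM) ENNReal.ofReal_ne_top

end Matrix

section StandardGaussian

variable {ι : Type*} [Fintype ι]

theorem exp_neg_dotProduct_self_div_two (z : ι → ℝ) :
    exp (-(z ⬝ᵥ z) / 2) = ∏ i, exp (-(1 / 2) * z i ^ 2) := by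
  rw [← exp_sum, dotProduct, neg_div, Finset.sum_div, ← Finset.sum_neg_distrib]
  exact congrArg exp (Finset.sum_congr rfl fun i _ ↦ by ring)

theorem integrable_exp_neg_dotProduct_self_div_two :
    Integrable fun z : ι → ℝ ↦ exp (-(z ⬝ᵥ z) / 2) := by
  simp_rw [exp_neg_dotProduct_self_div_two]
  exact Integrable.fintype_prod fun _ ↦ integrable_exp_neg_mul_sq (by norm_num)

theorem integral_exp_neg_dotProduct_self_div_two :
    ∫ z : ι → ℝ, exp (-(z ⬝ᵥ z) / 2) = √(2 * π) ^ Fintype.card ι := by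
  simp_rw [exp_neg_dotProduct_self_div_two]
  rw [integral_fintype_prod_volume_eq_pow (fun t : ℝ ↦ exp (-(1 / 2) * t ^ 2)),
    integral_gaussian]
  congr 2
  ring

end StandardGaussian

namespace Matrix

variable {ι : Type*} [Fintype ι] [DecidableEq ι]

open scoped MatrixOrder in
theorem PosDef.exists_eq_transpose_mul_self {A : Matrix ι ι ℝ} (hA : A.PosDef) :
    ∃ B : Matrix ι ι ℝ, B.det ≠ 0 ∧ A = Bᵀ * B := by
  obtain ⟨B, hB⟩ := CStarAlgebra.nonneg_iff_eq_star_mul_self.mp hA.posSemidef.nonneg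
  rw [star_eq_conjTranspose, conjTranspose_eq_transpose_of_trivial] at hB
  refine ⟨B, fun hB0 ↦ hA.det_pos.ne' ?_, hB⟩
  rw [hB, det_mul, hB0, mul_zero]

theorem transpose_mulVec_dotProduct_inv_mulVec {B : Matrix ι ι ℝ} (hB : IsUnit B.det)
    (z : ι → ℝ) : (Bᵀ *ᵥ z) ⬝ᵥ (Bᵀ * B)⁻¹ *ᵥ (Bᵀ *ᵥ z) = z ⬝ᵥ z := by
  rw [mul_inv_rev, ← mulVec_mulVec, mulVec_mulVec _ (Bᵀ)⁻¹,
    nonsing_inv_mul _ (by rwa [det_transpose]), one_mulVec, dotProduct_mulVec, mulVec_transpose,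
    vecMul_vecMul, mul_nonsing_inv _ hB, vecMul_one]

theorem add_mulVec_dotProduct_inv_mulVec {A : Matrix ι ι ℝ} (hA : A.IsSymm) (hdet : IsUnit A.det)
    (y b : ι → ℝ) :
    (y + A *ᵥ b) ⬝ᵥ A⁻¹ *ᵥ (y + A *ᵥ b) = y ⬝ᵥ A⁻¹ *ᵥ y + 2 * (b ⬝ᵥ y) + b ⬝ᵥ A *ᵥ b := by
  have hinv : A⁻¹ *ᵥ (A *ᵥ b) = b := by rw [mulVec_mulVec, nonsing_inv_mul A hdet, one_mulVec]
  have hcross : (A *ᵥ b) ⬝ᵥ A⁻¹ *ᵥ y = b ⬝ᵥ y := by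
    rw [dotProduct_mulVec, ← mulVec_transpose, transpose_nonsing_inv, hA.eq, hinv]
  rw [mulVec_add, hinv, dotProduct_add, add_dotProduct, add_dotProduct, hcross,
    dotProduct_comm y b, dotProduct_comm (A *ᵥ b) b]
  ring

end Matrix

section GaussianDensity

variable {d : ℕ} {A : Matrix (Fin d) (Fin d) ℝ}

theorem gaussianDensity_eq (hA : 0 ≤ A.det) (y : Fin d → ℝ) :
    gaussianDensity A y = (√(2 * π) ^ d * √A.det)⁻¹ * exp (-(y ⬝ᵥ A⁻¹ *ᵥ y) / 2) := by
  have h2π : 0 ≤ 2 * π := by positivity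
  rw [gaussianDensity, mul_inv, sqrt_eq_rpow, sqrt_eq_rpow, ← rpow_natCast,
    ← rpow_mul h2π, ← rpow_neg h2π, ← rpow_neg hA]
  congr 4 <;> ring

theorem gaussianDensity_nonneg (hA : 0 ≤ A.det) (y : Fin d → ℝ) : 0 ≤ gaussianDensity A y := by
  rw [gaussianDensity_eq hA]
  positivity

theorem gaussianDensity_transpose_mul_self_mulVec {B : Matrix (Fin d) (Fin d) ℝ}
    (hB : B.det ≠ 0) (z : Fin d → ℝ) :
    gaussianDensity (Bᵀ * B) (Bᵀ *ᵥ z) = (√(2 * π) ^ d * |B.det|)⁻¹ * exp (-(z ⬝ᵥ z) / 2) := by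
  have hdet : (Bᵀ * B).det = B.det * B.det := by rw [det_mul, det_transpose]
  rw [gaussianDensity_eq (hdet ▸ mul_self_nonneg _),
    transpose_mulVec_dotProduct_inv_mulVec hB.isUnit, hdet, sqrt_mul_self_eq_abs]

theorem integral_gaussianDensity (hA : A.PosDef) : ∫ y, gaussianDensity A y = 1 := by
  obtain ⟨B, hB, rfl⟩ := hA.exists_eq_transpose_mul_self
  rw [integral_eq_abs_det_mul_integral_comp_mulVec (M := Bᵀ) (by rwa [det_transpose])]
  simp_rw [gaussianDensity_transpose_mul_self_mulVec hB]
  rw [integral_const_mul, integral_exp_neg_dotProduct_self_div_two, Fintype.card_fin,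
    det_transpose]
  field_simp

theorem integrable_gaussianDensity (hA : A.PosDef) : Integrable (gaussianDensity A) := by
  obtain ⟨B, hB, rfl⟩ := hA.exists_eq_transpose_mul_self
  rw [← integrable_comp_mulVec_iff (M := Bᵀ) (by rwa [det_transpose])]
  simp_rw [gaussianDensity_transpose_mul_self_mulVec hB]
  exact integrable_exp_neg_dotProduct_self_div_two.const_mul _

theorem exp_neg_dotProduct_mul_gaussianDensity (hA : A.IsSymm) (hdet : IsUnit A.det)
    (b y : Fin d → ℝ) :
    exp (-(b ⬝ᵥ y)) * gaussianDensity A y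
      = exp (b ⬝ᵥ A *ᵥ b / 2) * gaussianDensity A (y + A *ᵥ b) := by
  rw [gaussianDensity, gaussianDensity, add_mulVec_dotProduct_inv_mulVec hA hdet,
    mul_left_comm, ← exp_add, mul_left_comm (exp _), ← exp_add]
  ring_nf

theorem integrable_exp_neg_dotProduct_mul_gaussianDensity (hA : A.PosDef) (b : Fin d → ℝ) :
    Integrable fun y ↦ exp (-(b ⬝ᵥ y)) * gaussianDensity A y := by
  simp_rw [exp_neg_dotProduct_mul_gaussianDensity (isHermitian_iff_isSymm.mp hA.isHermitian)
    hA.det_pos.ne'.isUnit b]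
  exact ((integrable_gaussianDensity hA).comp_add_right _).const_mul _

theorem integral_exp_neg_dotProduct_mul_gaussianDensity (hA : A.PosDef) (b : Fin d → ℝ) :
    ∫ y, exp (-(b ⬝ᵥ y)) * gaussianDensity A y = exp (b ⬝ᵥ A *ᵥ b / 2) := by
  simp_rw [exp_neg_dotProduct_mul_gaussianDensity (isHermitian_iff_isSymm.mp hA.isHermitian)
    hA.det_pos.ne'.isUnit b]
  rw [integral_const_mul, integral_add_right_eq_self (gaussianDensity A),
    integral_gaussianDensity hA, mul_one]

theorem integral_mul_gaussianDensity_le_of_le_exp (hA : A.PosDef) {g : (Fin d → ℝ) → ℝ}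
    (hg0 : ∀ y, 0 ≤ g y) (c : ℝ) (b : Fin d → ℝ) (hg : ∀ y, g y ≤ exp (c - b ⬝ᵥ y)) :
    ∫ y, g y * gaussianDensity A y ≤ exp c * exp (b ⬝ᵥ A *ᵥ b / 2) := by
  have hφ := gaussianDensity_nonneg hA.det_pos.le
  have hsplit : ∀ y, exp (c - b ⬝ᵥ y) * gaussianDensity A y
      = exp c * (exp (-(b ⬝ᵥ y)) * gaussianDensity A y) := fun y ↦ by
    rw [sub_eq_add_neg, exp_add, mul_assoc]
  calc ∫ y, g y * gaussianDensity A y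
      ≤ ∫ y, exp (c - b ⬝ᵥ y) * gaussianDensity A y := by
        refine integral_mono_of_nonneg (.of_forall fun y ↦ mul_nonneg (hg0 y) (hφ y)) ?_
          (.of_forall fun y ↦ mul_le_mul_of_nonneg_right (hg y) (hφ y))
        simp_rw [hsplit]
        exact (integrable_exp_neg_dotProduct_mul_gaussianDensity hA b).const_mul _
    _ = exp c * exp (b ⬝ᵥ A *ᵥ b / 2) := by
        simp_rw [hsplit]
        rw [integral_const_mul, integral_exp_neg_dotProduct_mul_gaussianDensity hA]

end GaussianDensity

theorem smoothed_minus_unsmoothed_ratio_bound_general {d : ℕ}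
    (fhat : (Fin d → ℝ) → ℝ) (A : Matrix (Fin d) (Fin d) ℝ)
    (hA : A.PosDef)
    (hfhat0 : ∀ x, 0 ≤ fhat x)
    (b : Fin d → ℝ) (β : ℝ)
    (ftil : (Fin d → ℝ) → ℝ)
    (hftil : ∀ x, ftil x = ∫ y, fhat (x - y) * gaussianDensity A y)
    (x : Fin d → ℝ)
    (hval : fhat x = Real.exp (b ⬝ᵥ x - β))
    (hbound : ∀ y : Fin d → ℝ, fhat (x - y) ≤ Real.exp (b ⬝ᵥ (x - y) - β)) :
    (ftil x - fhat x) / fhat x ≤ Real.exp (b ⬝ᵥ A.mulVec b / 2) - 1 := by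
  have hfx : 0 < fhat x := hval ▸ exp_pos _
  have hle : ftil x ≤ fhat x * exp (b ⬝ᵥ A *ᵥ b / 2) := by
    rw [hftil, hval]
    refine integral_mul_gaussianDensity_le_of_le_exp hA (fun y ↦ hfhat0 _) _ b fun y ↦ ?_
    convert hbound y using 2
    rw [dotProduct_sub]
    ring
  rw [div_le_iff₀ hfx]
  linarith

theorem smoothed_minus_unsmoothed_ratio_bound {d : ℕ}
    (fhat : (Fin d → ℝ) → ℝ) (A : Matrix (Fin d) (Fin d) ℝ)
    (hA : A.PosDef) (hAsymm : A.IsSymm)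
    (hfhat0 : ∀ x, 0 ≤ fhat x) (hfhatmeas : Measurable fhat)
    (hfhat1 : ∫ x, fhat x = 1)
    (Cj : Set (Fin d → ℝ)) (b : Fin d → ℝ) (β : ℝ)
    (ftil : (Fin d → ℝ) → ℝ)
    (hftil : ∀ x, ftil x = ∫ y, fhat (x - y) * gaussianDensity A y)
    (x : Fin d → ℝ) (hx : x ∈ Cj)
    (hval : fhat x = Real.exp (b ⬝ᵥ x - β))
    (hbound : ∀ y : Fin d → ℝ, fhat (x - y) ≤ Real.exp (b ⬝ᵥ (x - y) - β)) :
    (ftil x - fhat x) / fhat x ≤ Real.exp (b ⬝ᵥ A.mulVec b / 2) - 1 :=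
  smoothed_minus_unsmoothed_ratio_bound_general fhat A hA hfhat0 b β ftil hftil x hval hbound
end

section
/- Let f be an upper semi-continuous log-concave density on ℝ^d. Then there exist a₀ > 0 and b₀ ∈ ℝ such that f(x) ≤ exp(-a₀‖x‖ + b₀) for all x ∈ ℝ^d. -/
open MeasureTheory

/-- A log-concave function on `ℝ^d` (multiplicative form). -/
def LogConcaveFn {d : ℕ} (f : (Fin d → ℝ) → ℝ) : Prop :=
  (∀ x, 0 ≤ f x) ∧
    ∀ x y : Fin d → ℝ, ∀ t : ℝ, 0 ≤ t → t ≤ 1 →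
      f x ^ t * f y ^ (1 - t) ≤ f (t • x + (1 - t) • y)

/-!
Superlevel sets `{δ ≤ f}` of a log-concave `f` are convex. As `∫ f = 1`, some `{δ ≤ f}` with
`δ > 0` has positive volume, so it contains a ball `B(x₀, r)`; and `{δ / 2 ≤ f}` is convex of
finite volume with nonempty interior, hence bounded (a far point would span a long tube of
disjoint balls inside it). So `f ≤ f x₀ / 2` on some sphere of radius `T` around `x₀`, and
log-concavity along rays from `x₀` gives `f x ≤ f x₀ · 2 ^ (-‖x - x₀‖ / T)` outside it. Inside,
`f` is bounded: for every `y`, `f ≥ √(f y · δ)` on a ball of radius `r / 2` around the midpoint of `y` and `x₀`,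
and the integral of `f` over that ball is at most `1`.
-/

open Metric Bornology Set AffineMap
open scoped ENNReal

lemma exists_pos_measure_setOf_le_of_integral_ne_zero {α : Type*} [MeasurableSpace α]
    {μ : Measure α} {f : α → ℝ} (hf : ∀ x, 0 ≤ f x) (h : ∫ x, f x ∂μ ≠ 0) :
    ∃ δ > 0, μ {x | δ ≤ f x} ≠ 0 := by
  by_contra! hnull
  refine h (integral_eq_zero_of_ae ((Measure.measure_support_eq_zero_iff μ).mp ?_))
  refine measure_mono_null (fun x hx => ?_) (measure_iUnion_null fun n : ℕ =>
    hnull (1 / ((n : ℝ) + 1)) Nat.one_div_pos_of_nat)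
  obtain ⟨n, hn⟩ := exists_nat_one_div_lt ((hf x).lt_of_ne (Ne.symm hx))
  exact mem_iUnion.mpr ⟨n, hn.le⟩

section NormedSpace

variable {E : Type*} [NormedAddCommGroup E] [NormedSpace ℝ E]

lemma exists_mem_ball_lineMap_eq {x z p : E} {r t : ℝ} (ht : t < 1)
    (hp : p ∈ ball (lineMap x z t) ((1 - t) * r)) : ∃ b ∈ ball x r, lineMap b z t = p := by
  have ht' : 0 < 1 - t := sub_pos.mpr ht
  refine ⟨z + (1 - t)⁻¹ • (p - z), ?_, ?_⟩
  · have hsub : z + (1 - t)⁻¹ • (p - z) - x = (1 - t)⁻¹ • (p - lineMap x z t) := by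
      rw [lineMap_apply_module]
      match_scalars <;> field_simp; ring
    rw [mem_ball, dist_eq_norm, hsub, norm_smul, Real.norm_of_nonneg (inv_nonneg.mpr ht'.le),
      inv_mul_lt_iff₀ ht', ← dist_eq_norm]
    exact hp
  · rw [lineMap_apply_module]
    match_scalars <;> field_simp; ring

lemma Convex.ball_lineMap_subset {C : Set E} (hC : Convex ℝ C) {x z : E} {r t : ℝ}
    (hball : ball x r ⊆ C) (hz : z ∈ C) (ht₀ : 0 ≤ t) (ht₁ : t < 1) :
    ball (lineMap x z t) ((1 - t) * r) ⊆ C := by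
  intro p hp
  obtain ⟨b, hb, rfl⟩ := exists_mem_ball_lineMap_eq ht₁ hp
  exact hC.lineMap_mem (hball hb) hz ⟨ht₀, ht₁.le⟩

variable [MeasurableSpace E] [BorelSpace E]
  (μ : Measure E) [μ.IsAddHaarMeasure]

lemma Convex.interior_nonempty_of_measure_ne_zero [FiniteDimensional ℝ E] {C : Set E}
    (hC : Convex ℝ C) (hμ : μ C ≠ 0) : (interior C).Nonempty := by
  rw [hC.interior_nonempty_iff_affineSpan_eq_top]
  by_contra hspan
  exact hμ (measure_mono_null (subset_affineSpan ℝ C) (Measure.addHaar_affineSubspace μ _ hspan))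

/-- The balls `ball (lineMap x z (k * r / dist x z)) (r / 2)`, `k < N`, are disjoint and lie
in `C`. -/
lemma Convex.natCast_mul_measure_ball_le {C : Set E} (hC : Convex ℝ C) {x z : E} {r : ℝ}
    (hr : 0 < r) (hball : ball x r ⊆ C) (hz : z ∈ C) {N : ℕ} (hN : 2 * N * r < dist x z) :
    N * μ (ball x (r / 2)) ≤ μ C := by
  have hs : 0 < dist x z := lt_of_le_of_lt (by positivity) hN
  set c : ℕ → E := fun k => lineMap x z (k * r / dist x z)
  have hsub : ∀ k ∈ Finset.range N, ball (c k) (r / 2) ⊆ C := by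
    intro k hk
    have hkN : (k : ℝ) + 1 ≤ N := by exact_mod_cast Finset.mem_range.mp hk
    have hk : k * r / dist x z ≤ 1 / 2 := by
      rw [div_le_iff₀ hs]
      nlinarith
    refine (ball_subset_ball ?_).trans
      (hC.ball_lineMap_subset hball hz (by positivity) (by linarith))
    nlinarith
  have hdisj : (Finset.range N : Set ℕ).PairwiseDisjoint fun k => ball (c k) (r / 2) := by
    intro i _ j _ hij
    apply ball_disjoint_ball
    have hij : (1 : ℝ) ≤ |(i : ℝ) - j| := by
      exact_mod_cast Int.one_le_abs (sub_ne_zero.mpr (Int.ofNat_inj.not.mpr hij))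
    rw [dist_lineMap_lineMap, Real.dist_eq, ← sub_div, ← sub_mul, abs_div, abs_mul,
      abs_of_pos hr, abs_of_pos hs, div_mul_cancel₀ _ hs.ne']
    nlinarith
  calc (N : ℝ≥0∞) * μ (ball x (r / 2)) = ∑ k ∈ Finset.range N, μ (ball (c k) (r / 2)) := by
        simp [Measure.addHaar_ball_center μ _ (r / 2)]
    _ = μ (⋃ k ∈ Finset.range N, ball (c k) (r / 2)) :=
        (measure_biUnion_finset hdisj fun k _ => measurableSet_ball).symm
    _ ≤ μ C := measure_mono (iUnion₂_subset hsub)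

lemma Convex.isBounded_of_measure_ne_top {C : Set E} (hC : Convex ℝ C) (hμ : μ C ≠ ∞)
    (hint : (interior C).Nonempty) : IsBounded C := by
  obtain ⟨x, hx⟩ := hint
  obtain ⟨r, hr, hball⟩ := Metric.isOpen_iff.mp isOpen_interior x hx
  have hv : μ (ball x (r / 2)) ≠ 0 := (measure_ball_pos μ x (half_pos hr)).ne'
  obtain ⟨N, hN⟩ := ENNReal.exists_nat_gt (ENNReal.div_lt_top hμ hv).ne
  rw [isBounded_iff_subset_closedBall x]
  refine ⟨2 * N * r, fun z hz => ?_⟩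
  by_contra hfar
  rw [mem_closedBall, not_le, dist_comm] at hfar
  have := hC.natCast_mul_measure_ball_le μ hr (hball.trans interior_subset) hz hfar
  exact hN.not_ge ((ENNReal.le_div_iff_mul_le (.inl hv) (.inr hμ)).mpr this)

end NormedSpace

lemma exists_forall_le_exp_of_forall_le_of_decay {E : Type*} [SeminormedAddCommGroup E]
    {g : E → ℝ} {x₀ : E} {M a T : ℝ} (hM : 0 < M) (ha : 0 ≤ a) (hT : 0 ≤ T) (hbdd : ∀ x, g x ≤ M)
    (hdecay : ∀ x, T ≤ ‖x - x₀‖ → g x ≤ M * Real.exp (-a * ‖x - x₀‖)) :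
    ∃ b, ∀ x, g x ≤ Real.exp (-a * ‖x‖ + b) := by
  refine ⟨Real.log M + a * T + a * ‖x₀‖, fun x => ?_⟩
  have hnear : g x ≤ M * Real.exp (-a * (‖x - x₀‖ - T)) := by
    rcases le_or_gt T ‖x - x₀‖ with hfar | hnear
    · exact (hdecay x hfar).trans (by gcongr M * Real.exp ?_; nlinarith)
    · exact (hbdd x).trans (le_mul_of_one_le_right hM.le (Real.one_le_exp (by nlinarith)))
  calc g x ≤ M * Real.exp (-a * (‖x - x₀‖ - T)) := hnear
    _ = Real.exp (Real.log M + -a * (‖x - x₀‖ - T)) := by rw [Real.exp_add, Real.exp_log hM]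
    _ ≤ Real.exp (-a * ‖x‖ + (Real.log M + a * T + a * ‖x₀‖)) := by
        gcongr Real.exp ?_
        nlinarith [norm_sub_norm_le x x₀]

namespace LogConcaveFn

variable {d : ℕ} {f : (Fin d → ℝ) → ℝ}

lemma le_lineMap (hf : LogConcaveFn f) (x y : Fin d → ℝ) {t : ℝ} (ht₀ : 0 ≤ t) (ht₁ : t ≤ 1) :
    f x ^ (1 - t) * f y ^ t ≤ f (lineMap x y t) := by
  rw [lineMap_apply_module]
  simpa only [sub_sub_cancel] using hf.2 x y (1 - t) (by linarith) (by linarith)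

lemma convex_setOf_le (hf : LogConcaveFn f) (δ : ℝ) : Convex ℝ {x | δ ≤ f x} := by
  rcases le_or_gt δ 0 with hδ | hδ
  · convert convex_univ
    exact eq_univ_of_forall fun x => hδ.trans (hf.1 x)
  intro x hx y hy a b ha hb hab
  obtain rfl : b = 1 - a := by linarith
  calc δ = δ ^ a * δ ^ (1 - a) := by rw [← Real.rpow_add hδ]; simp
    _ ≤ f x ^ a * f y ^ (1 - a) :=
        mul_le_mul (by gcongr; exact hx) (by gcongr; exact hy) (by positivity)
          (Real.rpow_nonneg (hf.1 x) a)
    _ ≤ f (a • x + (1 - a) • y) := hf.2 x y a ha (by linarith)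

lemma sqrt_mul_measureReal_ball_le_integral (hf : LogConcaveFn f) (hint : Integrable f)
    {x₀ : Fin d → ℝ} {δ r : ℝ} (hδ : 0 ≤ δ) (hball : ball x₀ r ⊆ {x | δ ≤ f x})
    (y : Fin d → ℝ) : √(f y * δ) * volume.real (ball x₀ (r / 2)) ≤ ∫ x, f x := by
  set B := ball (lineMap x₀ y (1 / 2 : ℝ)) ((1 - 1 / 2) * r)
  have hlow : ∀ p ∈ B, √(f y * δ) ≤ f p := by
    intro p hp
    obtain ⟨b, hb, rfl⟩ := exists_mem_ball_lineMap_eq (by norm_num) hp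
    calc √(f y * δ) = δ ^ (1 - 1 / 2 : ℝ) * f y ^ (1 / 2 : ℝ) := by
          rw [Real.sqrt_eq_rpow, Real.mul_rpow (hf.1 y) hδ]; norm_num; ring
      _ ≤ f b ^ (1 - 1 / 2 : ℝ) * f y ^ (1 / 2 : ℝ) :=
          mul_le_mul_of_nonneg_right (by gcongr; exact hball hb) (Real.rpow_nonneg (hf.1 y) _)
      _ ≤ f (lineMap b y (1 / 2 : ℝ)) := hf.le_lineMap b y (by norm_num) (by norm_num)
  have hB : volume.real B = volume.real (ball x₀ (r / 2)) := by
    rw [Measure.addHaar_real_ball_center, Measure.addHaar_real_ball_center volume x₀]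
    norm_num [div_eq_inv_mul]
  calc √(f y * δ) * volume.real (ball x₀ (r / 2)) ≤ ∫ x in B, f x := by
        rw [← hB]
        exact setIntegral_ge_of_const_le_real measurableSet_ball measure_ball_lt_top.ne hlow
          hint.integrableOn
    _ ≤ ∫ x, f x := setIntegral_le_integral hint (.of_forall hf.1)

lemma bddAbove_range (hf : LogConcaveFn f) (hint : Integrable f) {x₀ : Fin d → ℝ} {δ r : ℝ}
    (hδ : 0 < δ) (hr : 0 < r) (hball : ball x₀ r ⊆ {x | δ ≤ f x}) : BddAbove (range f) := by
  set v := volume.real (ball x₀ (r / 2))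
  have hv : 0 < v :=
    ENNReal.toReal_pos (measure_ball_pos _ _ (half_pos hr)).ne' measure_ball_lt_top.ne
  refine ⟨(∫ x, f x) ^ 2 / (δ * v ^ 2), forall_mem_range.mpr fun y => ?_⟩
  have := hf.sqrt_mul_measureReal_ball_le_integral hint hδ.le hball y
  rw [← le_div_iff₀ hv, Real.sqrt_le_iff] at this
  rw [le_div_iff₀ (by positivity)]
  calc f y * (δ * v ^ 2) = f y * δ * v ^ 2 := by ring
    _ ≤ ((∫ x, f x) / v) ^ 2 * v ^ 2 := by gcongr; exact this.2
    _ = (∫ x, f x) ^ 2 := by field_simp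

/-- With `t = T / ‖x - x₀‖`, log-concavity at the point of `[x₀, x]` on the sphere gives
`f x ^ t ≤ f x₀ ^ t / 2`. -/
lemma le_mul_exp_of_forall_norm_sub_eq (hf : LogConcaveFn f) {x₀ : Fin d → ℝ} {T : ℝ}
    (hT : 0 < T) (hx₀ : 0 < f x₀) (hsphere : ∀ z, ‖z - x₀‖ = T → f z ≤ f x₀ / 2)
    {x : Fin d → ℝ} (hx : T ≤ ‖x - x₀‖) :
    f x ≤ f x₀ * Real.exp (-(Real.log 2 / T) * ‖x - x₀‖) := by
  set s := ‖x - x₀‖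
  have hs : 0 < s := hT.trans_le hx
  set t := T / s
  have ht : 0 < t := by positivity
  have hz : ‖lineMap x₀ x t - x₀‖ = T := by
    rw [← dist_eq_norm, dist_lineMap_left, Real.norm_of_nonneg ht.le, dist_comm, dist_eq_norm,
      div_mul_cancel₀ _ hs.ne']
  have hchain : f x₀ ^ (1 - t) * f x ^ t ≤ f x₀ ^ (1 - t) * (f x₀ ^ t / 2) := by
    calc f x₀ ^ (1 - t) * f x ^ t ≤ f (lineMap x₀ x t) :=
          hf.le_lineMap x₀ x ht.le ((div_le_one hs).mpr hx)
      _ ≤ f x₀ / 2 := hsphere _ hz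
      _ = f x₀ ^ (1 - t) * (f x₀ ^ t / 2) := by
          rw [mul_div_assoc', ← Real.rpow_add hx₀, sub_add_cancel, Real.rpow_one]
  have hpow : (f x₀ * Real.exp (-(Real.log 2 / T) * s)) ^ t = f x₀ ^ t / 2 := by
    rw [Real.mul_rpow hx₀.le (Real.exp_pos _).le, ← Real.exp_mul,
      show -(Real.log 2 / T) * s * t = -Real.log 2 by simp only [t]; field_simp, Real.exp_neg,
      Real.exp_log two_pos, div_eq_mul_inv]
  rw [← Real.rpow_le_rpow_iff (hf.1 x) (by positivity) ht, hpow]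
  exact le_of_mul_le_mul_left hchain (by positivity)

end LogConcaveFn

theorem logConcave_density_exponential_tail_general {d : ℕ}
    (f : (Fin d → ℝ) → ℝ)
    (hlc : LogConcaveFn f) (hint : ∫ x, f x = 1) :
    ∃ a₀ > 0, ∃ b₀ : ℝ, ∀ x, f x ≤ Real.exp (-a₀ * ‖x‖ + b₀) := by
  have hint₀ : ∫ x, f x ≠ 0 := hint ▸ one_ne_zero
  have hintg : Integrable f := .of_integral_ne_zero hint₀
  obtain ⟨δ, hδ, hδμ⟩ := exists_pos_measure_setOf_le_of_integral_ne_zero hlc.1 hint₀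
  obtain ⟨x₀, hx₀⟩ := (hlc.convex_setOf_le δ).interior_nonempty_of_measure_ne_zero volume hδμ
  obtain ⟨r, hr, hball⟩ := Metric.isOpen_iff.mp isOpen_interior x₀ hx₀
  have hfx₀ : δ ≤ f x₀ := (interior_subset hx₀ : x₀ ∈ {x | δ ≤ f x})
  have hbdd : IsBounded {x | δ / 2 ≤ f x} :=
    (hlc.convex_setOf_le _).isBounded_of_measure_ne_top volume
      (hintg.measure_ge_lt_top (half_pos hδ)).ne
      ⟨x₀, interior_mono (fun x (hx : δ ≤ f x) => show δ / 2 ≤ f x by linarith) hx₀⟩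
  obtain ⟨T, hT, hTball⟩ := hbdd.subset_ball_lt 0 x₀
  have hsphere : ∀ z, ‖z - x₀‖ = T → f z ≤ f x₀ / 2 := fun z hz => by
    by_contra! hgt
    have := hTball (show δ / 2 ≤ f z by linarith)
    rw [mem_ball, dist_eq_norm, hz] at this
    exact this.false
  obtain ⟨M, hM⟩ := hlc.bddAbove_range hintg hδ hr (hball.trans interior_subset)
  have hfM : ∀ x, f x ≤ M := fun x => hM (mem_range_self x)
  obtain ⟨b, hb⟩ := exists_forall_le_exp_of_forall_le_of_decay (a := Real.log 2 / T)
    (hδ.trans_le (hfx₀.trans (hfM x₀))) (by positivity) hT.le hfM fun x hx =>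
      (hlc.le_mul_exp_of_forall_norm_sub_eq hT (hδ.trans_le hfx₀) hsphere hx).trans
        (by gcongr; exact hfM x₀)
  exact ⟨Real.log 2 / T, by positivity, b, hb⟩

theorem logConcave_density_exponential_tail {d : ℕ}
    (f : (Fin d → ℝ) → ℝ) (husc : UpperSemicontinuous f)
    (hlc : LogConcaveFn f) (hmeas : Measurable f) (hint : ∫ x, f x = 1) :
    ∃ a₀ > 0, ∃ b₀ : ℝ, ∀ x, f x ≤ Real.exp (-a₀ * ‖x‖ + b₀) :=
  logConcave_density_exponential_tail_general f hlc hint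
end
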